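/- arXiv:quant-ph/0607011 — 2 statements merged into one kernel-verified Lean document; each statement's English description precedes it below -/
import Mathlib

section
/- Let ρ_1, …, ρ_n be d×d positive semidefinite complex matrices, let p_1, …, p_n be nonnegative reals, and suppose ρ = ∑_{i=1}^{n} p_i ρ_i is positive definite. For each i let {v_{i1}, …, v_{id}} be an orthonormal basis of ℂ^d and λ_{i1}, …, λ_{id} ≥ 0 be such that ρ_i = ∑_{k=1}^{d} λ_{ik} v_{ik} v_{ik}ᴴ (a spectral decomposition). Then ∑_{i=1}^{n} tr( ρ^{−1/2} (p_i ρ_i) ρ^{−1/2} (p_i ρ_i) ) ≥ ∑_{i=1}^{n} ∑_{k=1}^{d} (p_i λ_{ik})² · (⟨v_{ik}, ρ^{−1/2} v_{ik}⟩)². -/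
open Matrix
open scoped ComplexOrder

/-- The square root of a positive semidefinite matrix (removed from Mathlib; old definition). -/
noncomputable def Matrix.PosSemidef.sqrt {n : Type*} [Fintype n] [DecidableEq n] {𝕜 : Type*} [RCLike 𝕜]
    {A : Matrix n n 𝕜} (hA : A.PosSemidef) : Matrix n n 𝕜 :=
  hA.1.eigenvectorUnitary.1 * diagonal ((↑) ∘ (√·) ∘ hA.1.eigenvalues) *
    (star hA.1.eigenvectorUnitary : Matrix n n 𝕜)

/-!
Write `σ = ρ^{-1/2}` and `p_i ρ_i = ∑_k a_k v_k v_kᴴ` with `a_k = p_i λ_{ik} ≥ 0`. Since `σ` is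
Hermitian, `tr(σ (v_k v_kᴴ) σ (v_l v_lᴴ)) = |⟨v_k, σ v_l⟩|²`, so the `i`-th trace on the right is
`∑_{k,l} a_k a_l |⟨v_k, σ v_l⟩|²`, a sum of nonnegative terms. Dropping the off-diagonal terms and
bounding `|z|² ≥ (re z)²` gives the `i`-th summand on the left.
-/

namespace Matrix

variable {m ι 𝕜 : Type*} [Fintype m] [Fintype ι] [RCLike 𝕜]

theorem PosSemidef.isHermitian_sqrt [DecidableEq m] {A : Matrix m m 𝕜} (hA : A.PosSemidef) :
    hA.sqrt.IsHermitian := by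
  simp only [IsHermitian, PosSemidef.sqrt, conjTranspose_mul, star_eq_conjTranspose,
    conjTranspose_conjTranspose, diagonal_conjTranspose, Matrix.mul_assoc]
  congr 2
  ext i j
  simp [diagonal_apply]

theorem IsHermitian.star_dotProduct_mulVec {σ : Matrix m m 𝕜} (hσ : σ.IsHermitian)
    (a b : m → 𝕜) : star (star a ⬝ᵥ σ *ᵥ b) = star b ⬝ᵥ σ *ᵥ a := by
  rw [← star_dotProduct, star_mulVec, hσ.eq, dotProduct_mulVec]

theorem IsHermitian.trace_mul_vecMulVec_mul_mul_vecMulVec {σ : Matrix m m 𝕜}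
    (hσ : σ.IsHermitian) (a b : m → 𝕜) :
    (σ * vecMulVec a (star a) * σ * vecMulVec b (star b)).trace =
      (‖star a ⬝ᵥ σ *ᵥ b‖ ^ 2 : ℝ) := by
  have hleft : star a ᵥ* σ ⬝ᵥ b = star a ⬝ᵥ σ *ᵥ b := (dotProduct_mulVec _ _ _).symm
  have hright : σ *ᵥ a ⬝ᵥ star b = star (star a ⬝ᵥ σ *ᵥ b) := by
    rw [dotProduct_comm, hσ.star_dotProduct_mulVec]
  rw [mul_vecMulVec σ a, vecMulVec_mul _ _ σ, vecMulVec_mul_vecMulVec, trace_vecMulVec,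
    dotProduct_smul, smul_eq_mul, hleft, hright, RCLike.star_def, RCLike.mul_conj,
    RCLike.ofReal_pow]

theorem IsHermitian.re_trace_mul_sum_vecMulVec_mul_mul_sum_vecMulVec {σ : Matrix m m 𝕜}
    (hσ : σ.IsHermitian) (a : ι → ℝ) (u : ι → m → 𝕜) :
    RCLike.re (σ * (∑ k, (a k : 𝕜) • vecMulVec (u k) (star (u k))) * σ *
        (∑ k, (a k : 𝕜) • vecMulVec (u k) (star (u k)))).trace =
      ∑ k, ∑ l, a k * a l * ‖star (u k) ⬝ᵥ σ *ᵥ u l‖ ^ 2 := by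
  simp only [Matrix.sum_mul, Matrix.mul_smul, Matrix.smul_mul, trace_sum,
    trace_smul, hσ.trace_mul_vecMulVec_mul_mul_vecMulVec, smul_eq_mul, Finset.mul_sum, map_sum]
  rw [Finset.sum_comm]
  refine Finset.sum_congr rfl fun k _ => Finset.sum_congr rfl fun l _ => ?_
  simp only [← RCLike.ofReal_mul, RCLike.ofReal_re]
  ring

theorem IsHermitian.sum_sq_mul_sq_re_le_re_trace {σ : Matrix m m 𝕜} (hσ : σ.IsHermitian)
    {a : ι → ℝ} (ha : ∀ k, 0 ≤ a k) (u : ι → m → 𝕜) :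
    ∑ k, a k ^ 2 * RCLike.re (star (u k) ⬝ᵥ σ *ᵥ u k) ^ 2 ≤
      RCLike.re (σ * (∑ k, (a k : 𝕜) • vecMulVec (u k) (star (u k))) * σ *
        (∑ k, (a k : 𝕜) • vecMulVec (u k) (star (u k)))).trace := by
  rw [hσ.re_trace_mul_sum_vecMulVec_mul_mul_sum_vecMulVec]
  refine Finset.sum_le_sum fun k _ => ?_
  calc a k ^ 2 * RCLike.re (star (u k) ⬝ᵥ σ *ᵥ u k) ^ 2
      ≤ a k * a k * ‖star (u k) ⬝ᵥ σ *ᵥ u k‖ ^ 2 := by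
        rw [← sq]
        exact mul_le_mul_of_nonneg_left (sq_le_sq' (abs_le.mp (RCLike.abs_re_le_norm _)).1
          (abs_le.mp (RCLike.abs_re_le_norm _)).2) (sq_nonneg _)
    _ ≤ ∑ l, a k * a l * ‖star (u k) ⬝ᵥ σ *ᵥ u l‖ ^ 2 :=
        Finset.single_le_sum (f := fun l => a k * a l * ‖star (u k) ⬝ᵥ σ *ᵥ u l‖ ^ 2)
          (fun l _ => by have := ha k; have := ha l; positivity) (Finset.mem_univ k)

end Matrix

theorem stmt_8_general (n d : ℕ) (ρi : Fin n → Matrix (Fin d) (Fin d) ℂ)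
    (p : Fin n → ℝ) (hp : ∀ i, 0 ≤ p i)
    (v : Fin n → Fin d → (Fin d → ℂ))
    (lam : Fin n → Fin d → ℝ) (hlam : ∀ i k, 0 ≤ lam i k)
    (hspec : ∀ i, ρi i = ∑ k, (lam i k : ℂ) • Matrix.vecMulVec (v i k) (star (v i k)))
    (ρ : Matrix (Fin d) (Fin d) ℂ)
    (hρ : ρ.PosDef) :
    ∑ i, ∑ k, (p i * lam i k) ^ 2 *
        ((star (v i k) ⬝ᵥ ((hρ.posSemidef.sqrt)⁻¹ *ᵥ v i k)).re) ^ 2 ≤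
      ∑ i, (((hρ.posSemidef.sqrt)⁻¹ * ((p i : ℂ) • ρi i) * (hρ.posSemidef.sqrt)⁻¹ *
        ((p i : ℂ) • ρi i)).trace).re := by
  have hσ := hρ.posSemidef.isHermitian_sqrt.inv
  refine Finset.sum_le_sum fun i _ => ?_
  have hweights : (p i : ℂ) • ρi i =
      ∑ k, ((p i * lam i k : ℝ) : ℂ) • vecMulVec (v i k) (star (v i k)) := by
    simp only [hspec i, Finset.smul_sum, smul_smul, Complex.ofReal_mul]
  rw [hweights]
  exact hσ.sum_sq_mul_sq_re_le_re_trace (fun k => mul_nonneg (hp i) (hlam i k)) (v i)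

theorem stmt_8 (n d : ℕ) (ρi : Fin n → Matrix (Fin d) (Fin d) ℂ)
    (hρi : ∀ i, (ρi i).PosSemidef)
    (p : Fin n → ℝ) (hp : ∀ i, 0 ≤ p i)
    (v : Fin n → Fin d → (Fin d → ℂ))
    (hortho : ∀ i k l, star (v i k) ⬝ᵥ v i l = if k = l then 1 else 0)
    (lam : Fin n → Fin d → ℝ) (hlam : ∀ i k, 0 ≤ lam i k)
    (hspec : ∀ i, ρi i = ∑ k, (lam i k : ℂ) • Matrix.vecMulVec (v i k) (star (v i k)))
    (ρ : Matrix (Fin d) (Fin d) ℂ) (hρdef : ρ = ∑ i, (p i : ℂ) • ρi i)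
    (hρ : ρ.PosDef) :
    ∑ i, ∑ k, (p i * lam i k) ^ 2 *
        ((star (v i k) ⬝ᵥ ((hρ.posSemidef.sqrt)⁻¹ *ᵥ v i k)).re) ^ 2 ≤
      ∑ i, (((hρ.posSemidef.sqrt)⁻¹ * ((p i : ℂ) • ρi i) * (hρ.posSemidef.sqrt)⁻¹ *
        ((p i : ℂ) • ρi i)).trace).re :=
  stmt_8_general n d ρi p hp v lam hlam hspec ρ hρ
end

section
/- Let ρ_1 = diag(1/2, 1/2, 0) and ρ_2 = diag(1/2, 0, 1/2) be 3×3 real diagonal matrices, taken with equal a priori probabilities p_1 = p_2 = 1/2, and let ρ = (ρ_1 + ρ_2)/2. Then ∑_{i=1}^{2} tr( ρ^{−1/2} (ρ_i/2) ρ^{−1/2} (ρ_i/2) ) = 3/4, while ∑_{i=1}^{2} (1/4) / ( ∑_{j=1}^{2} (1/2)·F(ρ_i, ρ_j) ) = 4/5; in particular the pretty good measurement success probability is strictly smaller than ∑_i p_i² / (∑_j p_j F(ρ_i, ρ_j)), so this expression is not a valid lower bound for mixed-state ensembles. -/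
open Matrix
open scoped ComplexOrder

theorem Matrix.PosSemidef.posSemidef_sqrt {n : Type*} [Fintype n] [DecidableEq n] {𝕜 : Type*} [RCLike 𝕜]
    {A : Matrix n n 𝕜} (hA : A.PosSemidef) : hA.sqrt.PosSemidef := by
  unfold Matrix.PosSemidef.sqrt
  refine PosSemidef.mul_mul_conjTranspose_same ?_ _
  refine posSemidef_diagonal_iff.2 fun i => ?_
  simp only [Function.comp_apply, RCLike.ofReal_nonneg]
  exact Real.sqrt_nonneg _

/-- `√ρ * σ * √ρ` is positive semidefinite when `ρ` and `σ` are. -/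
theorem sqrt_mul_mul_sqrt_posSemidef {d : ℕ} {ρ σ : Matrix (Fin d) (Fin d) ℂ}
    (hρ : ρ.PosSemidef) (hσ : σ.PosSemidef) : (hρ.sqrt * σ * hρ.sqrt).PosSemidef := by
  have h := hσ.mul_mul_conjTranspose_same hρ.sqrt
  rwa [hρ.posSemidef_sqrt.1.eq] at h

/-- The fidelity `F(ρ, σ) = (tr √(√ρ σ √ρ))²` of two positive semidefinite matrices. -/
noncomputable def fid {d : ℕ} {ρ σ : Matrix (Fin d) (Fin d) ℂ}
    (hρ : ρ.PosSemidef) (hσ : σ.PosSemidef) : ℝ :=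
  (((sqrt_mul_mul_sqrt_posSemidef hρ hσ).sqrt.trace).re) ^ 2

/-! All matrices involved are diagonal, so they commute and every matrix function acts entrywise:
the pretty good measurement term becomes `∑ᵢ aᵢ² / rᵢ` and the fidelity of diagonal states becomes
the squared Bhattacharyya coefficient `(∑ᵢ √(pᵢ qᵢ))²`. The square root of a diagonal matrix is
identified through the uniqueness of positive square roots in the continuous functional calculus. -/

namespace Matrix

variable {n 𝕜 : Type*} [DecidableEq n] [RCLike 𝕜]

theorem PosSemidef.nonneg_of_eq_diagonal {A : Matrix n n 𝕜} (hA : A.PosSemidef) {v : n → ℝ}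
    (hAv : A = diagonal fun i => (v i : 𝕜)) : 0 ≤ v := fun i => by
  subst hAv
  simpa using posSemidef_diagonal_iff.1 hA i

theorem PosDef.pos_of_eq_diagonal {A : Matrix n n 𝕜} (hA : A.PosDef) {v : n → ℝ}
    (hAv : A = diagonal fun i => (v i : 𝕜)) (i : n) : 0 < v i := by
  subst hAv
  simpa using posDef_diagonal_iff.1 hA i

variable [Fintype n]

open scoped MatrixOrder in
theorem PosSemidef.sqrt_eq_cfcSqrt {A : Matrix n n 𝕜} (hA : A.PosSemidef) :
    hA.sqrt = CFC.sqrt A := by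
  rw [CFC.sqrt_eq_cfc, cfc_nnreal_eq_real _ A (ha := hA.nonneg), hA.1.cfc_eq]
  unfold PosSemidef.sqrt IsHermitian.cfc
  congr 3
  funext i
  simp [max_eq_left (hA.eigenvalues_nonneg i)]

open scoped MatrixOrder in
theorem PosSemidef.sqrt_of_eq_diagonal {A : Matrix n n 𝕜} (hA : A.PosSemidef) {v : n → ℝ}
    (hAv : A = diagonal fun i => (v i : 𝕜)) : hA.sqrt = diagonal fun i => (√(v i) : 𝕜) := by
  have hv := hA.nonneg_of_eq_diagonal hAv
  rw [hA.sqrt_eq_cfcSqrt]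
  refine CFC.sqrt_unique ?_ (PosSemidef.diagonal fun i => ?_).nonneg
  · rw [hAv, diagonal_mul_diagonal]
    congr 1
    funext i
    rw [← RCLike.ofReal_mul, Real.mul_self_sqrt (hv i)]
  · simp [Real.sqrt_nonneg]

theorem PosDef.trace_inv_sqrt_mul_mul_inv_sqrt_mul_of_eq_diagonal {ρ A : Matrix n n 𝕜}
    (hρ : ρ.PosDef) {r a : n → ℝ} (hρr : ρ = diagonal fun i => (r i : 𝕜))
    (hAa : A = diagonal fun i => (a i : 𝕜)) :
    ((hρ.posSemidef.sqrt)⁻¹ * A * (hρ.posSemidef.sqrt)⁻¹ * A).trace =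
      ((∑ i, a i ^ 2 / r i : ℝ) : 𝕜) := by
  have hr := hρ.pos_of_eq_diagonal hρr
  have hinv : (hρ.posSemidef.sqrt)⁻¹ = diagonal fun i => (((√(r i))⁻¹ : ℝ) : 𝕜) := by
    rw [hρ.posSemidef.sqrt_of_eq_diagonal hρr]
    refine inv_eq_left_inv ?_
    rw [diagonal_mul_diagonal, ← diagonal_one]
    congr 1
    funext i
    rw [← RCLike.ofReal_mul, inv_mul_cancel₀ (Real.sqrt_pos.2 (hr i)).ne', RCLike.ofReal_one]
  rw [hinv, hAa]
  simp only [diagonal_mul_diagonal, trace_diagonal, ← RCLike.ofReal_mul, ← RCLike.ofReal_sum]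
  congr 1
  refine Finset.sum_congr rfl fun i _ => ?_
  calc (√(r i))⁻¹ * a i * (√(r i))⁻¹ * a i = a i ^ 2 / √(r i) ^ 2 := by ring
    _ = a i ^ 2 / r i := by rw [Real.sq_sqrt (hr i).le]

end Matrix

theorem fid_of_eq_diagonal {d : ℕ} {ρ σ : Matrix (Fin d) (Fin d) ℂ} (hρ : ρ.PosSemidef)
    (hσ : σ.PosSemidef) {p q : Fin d → ℝ} (hρp : ρ = diagonal fun i => (p i : ℂ))
    (hσq : σ = diagonal fun i => (q i : ℂ)) : fid hρ hσ = (∑ i, √(p i * q i)) ^ 2 := by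
  have hp := hρ.nonneg_of_eq_diagonal hρp
  have hmid : hρ.sqrt * σ * hρ.sqrt = diagonal fun i => ((p i * q i : ℝ) : ℂ) := by
    rw [hρ.sqrt_of_eq_diagonal hρp, hσq]
    simp only [diagonal_mul_diagonal]
    congr 1
    funext i
    rw [mul_right_comm, ← RCLike.ofReal_mul, Real.mul_self_sqrt (hp i)]
    exact (Complex.ofReal_mul _ _).symm
  unfold fid
  rw [PosSemidef.sqrt_of_eq_diagonal (v := fun i => p i * q i) _ hmid, trace_diagonal,
    Complex.re_sum, RCLike.ofReal_eq_complex_ofReal]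
  simp only [Complex.ofReal_re]

theorem stmt_10 (ρ1 ρ2 ρ : Matrix (Fin 3) (Fin 3) ℂ)
    (hρ1def : ρ1 = Matrix.diagonal ![1/2, 1/2, 0])
    (hρ2def : ρ2 = Matrix.diagonal ![1/2, 0, 1/2])
    (hρdef : ρ = (1/2 : ℂ) • (ρ1 + ρ2))
    (hρ1 : ρ1.PosSemidef) (hρ2 : ρ2.PosSemidef) (hρ : ρ.PosDef) :
    ((((hρ.posSemidef.sqrt)⁻¹ * ((1/2 : ℂ) • ρ1) * (hρ.posSemidef.sqrt)⁻¹ *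
          ((1/2 : ℂ) • ρ1)).trace).re +
        (((hρ.posSemidef.sqrt)⁻¹ * ((1/2 : ℂ) • ρ2) * (hρ.posSemidef.sqrt)⁻¹ *
          ((1/2 : ℂ) • ρ2)).trace).re = 3/4) ∧
    ((1/4 : ℝ) / ((1/2) * fid hρ1 hρ1 + (1/2) * fid hρ1 hρ2) +
        (1/4 : ℝ) / ((1/2) * fid hρ2 hρ1 + (1/2) * fid hρ2 hρ2) = 4/5) ∧
    ((((hρ.posSemidef.sqrt)⁻¹ * ((1/2 : ℂ) • ρ1) * (hρ.posSemidef.sqrt)⁻¹ *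
          ((1/2 : ℂ) • ρ1)).trace).re +
        (((hρ.posSemidef.sqrt)⁻¹ * ((1/2 : ℂ) • ρ2) * (hρ.posSemidef.sqrt)⁻¹ *
          ((1/2 : ℂ) • ρ2)).trace).re <
      (1/4 : ℝ) / ((1/2) * fid hρ1 hρ1 + (1/2) * fid hρ1 hρ2) +
        (1/4 : ℝ) / ((1/2) * fid hρ2 hρ1 + (1/2) * fid hρ2 hρ2)) := by
  have hρ1' : ρ1 = diagonal fun i => ((![1/2, 1/2, 0] : Fin 3 → ℝ) i : ℂ) := by
    rw [hρ1def]; congr 1; funext i; fin_cases i <;> simp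
  have hρ2' : ρ2 = diagonal fun i => ((![1/2, 0, 1/2] : Fin 3 → ℝ) i : ℂ) := by
    rw [hρ2def]; congr 1; funext i; fin_cases i <;> simp
  have hρ' : ρ = diagonal fun i => ((![1/2, 1/4, 1/4] : Fin 3 → ℝ) i : ℂ) := by
    rw [hρdef, hρ1def, hρ2def, diagonal_add, ← diagonal_smul]; congr 1; funext i
    fin_cases i <;> norm_num
  have hA1 : (1/2 : ℂ) • ρ1 = diagonal fun i => ((![1/4, 1/4, 0] : Fin 3 → ℝ) i : ℂ) := by
    rw [hρ1def, ← diagonal_smul]; congr 1; funext i; fin_cases i <;> norm_num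
  have hA2 : (1/2 : ℂ) • ρ2 = diagonal fun i => ((![1/4, 0, 1/4] : Fin 3 → ℝ) i : ℂ) := by
    rw [hρ2def, ← diagonal_smul]; congr 1; funext i; fin_cases i <;> norm_num
  rw [hρ.trace_inv_sqrt_mul_mul_inv_sqrt_mul_of_eq_diagonal (r := ![1/2, 1/4, 1/4])
      (a := ![1/4, 1/4, 0]) hρ' hA1,
    hρ.trace_inv_sqrt_mul_mul_inv_sqrt_mul_of_eq_diagonal (r := ![1/2, 1/4, 1/4])
      (a := ![1/4, 0, 1/4]) hρ' hA2,
    fid_of_eq_diagonal hρ1 hρ1 hρ1' hρ1', fid_of_eq_diagonal hρ1 hρ2 hρ1' hρ2',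
    fid_of_eq_diagonal hρ2 hρ1 hρ2' hρ1', fid_of_eq_diagonal hρ2 hρ2 hρ2' hρ2',
    RCLike.ofReal_eq_complex_ofReal, Complex.ofReal_re, Complex.ofReal_re]
  simp only [Fin.sum_univ_three, cons_val_zero, cons_val_one, cons_val_two]
  norm_num [Real.sqrt_mul_self]
end
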